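/- If z is ordinary, n ∈ {1,…,|z|}, and D = σ(PalExt(n)), then ω(1, D) ≤ h. -/

import Mathlib

namespace PalLen

variable {α : Type*}

/-- `u` is a palindrome (the empty word counts; "nonempty palindrome" adds `u ≠ []`). -/
def IsPal (u : List α) : Prop := u.reverse = u

/-- `ξ` is a period of the word `t` (0-indexed: `t[i] = t[i+ξ]` whenever both indices are
valid); in particular every `ξ ≥ |t|` is a period. -/
def IsPeriod (t : List α) (ξ : ℕ) : Prop :=
  1 ≤ ξ ∧ ∀ i : ℕ, i + ξ < t.length → t[i]? = t[i + ξ]?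

/-- the minimal period of `t` -/
noncomputable def mper (t : List α) : ℕ := sInf {ξ | IsPeriod t ξ}

/-- `order(t) = |t| / mper(t) ∈ ℚ` -/
noncomputable def wOrder (t : List α) : ℚ := (t.length : ℚ) / (mper t : ℚ)

/-- a non-periodic palindromic couple -/
def PalCouple (p₁ p₂ : List α) : Prop :=
  IsPal p₁ ∧ IsPal p₂ ∧ p₂ ≠ [] ∧ wOrder (p₁ ++ p₂ ++ p₁) < 2

/-- `wpow w n = w^n` -/
def wpow (w : List α) : ℕ → List α
  | 0 => []
  | n + 1 => w ++ wpow w n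

/-- `u` is a factor of the infinite word `w^∞` -/
def FactorOfPow (u w : List α) : Prop := ∃ n : ℕ, u <:+: wpow w n

/-- `u` is a prefix of the infinite word `w^∞` -/
def PrefixOfPow (u w : List α) : Prop := ∃ n : ℕ, u <+: wpow w n

/-- the palindromic length of a word -/
noncomputable def PL (u : List α) : ℕ :=
  sInf {k | ∃ ps : List (List α), ps.length = k ∧ (∀ p ∈ ps, p ≠ [] ∧ IsPal p) ∧
    ps.flatten = u}

/-- `u` is a (finite) factor of the infinite word `x` -/
def FactorOfInf (u : List α) (x : ℕ → α) : Prop :=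
  ∃ i : ℕ, u = (List.range u.length).map fun j => x (i + j)

/-- `u` is a prefix of the infinite word `x` -/
def PrefixOfInf (u : List α) (x : ℕ → α) : Prop :=
  u = (List.range u.length).map fun j => x j

/-- `x = u v v v ⋯` for some finite words `u, v` with `v` nonempty -/
def UltimatelyPeriodic (x : ℕ → α) : Prop :=
  ∃ u v : List α, v ≠ [] ∧ (∀ i : ℕ, i < u.length → u[i]? = some (x i)) ∧
    ∀ i : ℕ, v[i % v.length]? = some (x (u.length + i))

/-- padding of an infinite word over `Σ₀ = α`; the padding letter `b` is `none`,
the letters of `Σ₀` are embedded via `some`.  (0-indexed: even positions carry `b`.) -/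
def padInf (x : ℕ → α) : ℕ → Option α :=
  fun i => if i % 2 = 0 then none else some (x (i / 2))

/-- padding of a finite word: `pad(u₁u₂⋯uₙ) = u₁ b u₂ b ⋯ b uₙ` -/
def padF (u : List α) : List (Option α) := List.intersperse none (u.map some)

/-- the padded palindromic length: minimal `k` with `w = p₁ b p₂ b ⋯ b p_k`,
each `pᵢ` a nonempty palindrome -/
noncomputable def PPL (w : List (Option α)) : ℕ :=
  sInf {k | ∃ ps : List (List (Option α)), ps.length = k ∧
    (∀ p ∈ ps, p ≠ [] ∧ IsPal p) ∧ (List.intersperse [none] ps).flatten = w}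

/-- the set of nonempty non-periodic palindromic prefixes of `t` -/
def NPP (t : List α) : Set (List α) :=
  {p | p ≠ [] ∧ p <+: t ∧ IsPal p ∧ wOrder p < 2}

/-- the set of nonempty non-periodic palindromic prefixes of an infinite word -/
def NPPInf (x : ℕ → α) : Set (List α) :=
  {p | p ≠ [] ∧ PrefixOfInf p x ∧ IsPal p ∧ wOrder p < 2}

/-- a word is ordinary if no factor has more nonempty non-periodic palindromic prefixes -/
def Ordinary (t : List α) : Prop := ∀ u : List α, u <:+: t → (NPP u).ncard ≤ (NPP t).ncard

/-- `seg z i j = z[i,j]` (1-indexed, inclusive) -/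
def seg (z : List α) (i j : ℕ) : List α := (z.drop (i - 1)).take (j - i + 1)

/-- `Spread(D, ξ)` restricted to ℕ -/
def Spread (D : Set ℕ) (ξ : ℕ) : Set ℕ :=
  {n | ∃ i ∈ D, ∃ a : ℤ, (n : ℤ) = (i : ℤ) + a * (ξ : ℤ)}

/-- `Close(D) = [min D, max D]` for nonempty `D`, `∅` otherwise -/
def Close (D : Set ℕ) : Set ℕ := {n | D.Nonempty ∧ sInf D ≤ n ∧ n ≤ sSup D}

open Classical in
/-- the diameter of a set -/
noncomputable def diam (D : Set ℕ) : ℕ :=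
  if D.Nonempty then sSup D - sInf D + 1 else 0

/-- `D'` is a ξ-cut of `D` -/
def IsCut (D : Set ℕ) (ξ : ℕ) (D' : Set ℕ) : Prop :=
  D' ⊆ D ∧ (D' = ∅ ∨ diam D' ≤ ξ)

variable (z : List α)

/-- `h = |NPP(z)|` -/
noncomputable def hNPP : ℕ := (NPP z).ncard

/-- `θ(m) = (100h)^m` -/
noncomputable def theta (m : ℕ) : ℕ := (100 * hNPP z) ^ m

/-- the ambient set `W` of candidate nested periodic structures -/
def NPSW : Set (Set ℕ × ℕ) :=
  {Dξ | Dξ.1.Nonempty ∧ Dξ.1 ⊆ Set.Icc 1 z.length ∧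
    Dξ.1 = Spread Dξ.1 Dξ.2 ∩ Close Dξ.1 ∧
    IsPeriod (seg z (sInf Dξ.1) (sSup Dξ.1)) Dξ.2}

/-- nested periodic structures of degree `m` -/
def NestPer : ℕ → Set (Set ℕ × ℕ)
  | 0 => {Dξ ∈ NPSW z | Dξ.1.ncard = 1}
  | m + 1 => {Dξ ∈ NPSW z | ∀ D' : Set ℕ, IsCut Dξ.1 Dξ.2 D' →
      ∃ M : Set (Set ℕ × ℕ), M ⊆ NestPer m ∧ M.Finite ∧ M.ncard ≤ theta z (m + 1) ∧
        D' ⊆ (⋃ C ∈ M, C.1) ∧ (⋃ C ∈ M, C.1) ⊆ Close D'}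

/-- `ω(m, D)`: the minimal cardinality of an NPS cover of `D` of degree `m` -/
noncomputable def omegaMin (m : ℕ) (D : Set ℕ) : ℕ :=
  sInf {k | ∃ M : Set (Set ℕ × ℕ), M ⊆ NestPer z m ∧ M.Finite ∧ M.ncard = k ∧
    D ⊆ (⋃ C ∈ M, C.1) ∧ (⋃ C ∈ M, C.1) ⊆ Close D}

/-- `FirmPalPrefix(n)` -/
def FirmPalPrefix (n : ℕ) : Set (List α) :=
  {p₀ ∈ NPP (z.drop (n - 1)) | ∀ p₁ p₂ : List α, PalCouple p₁ p₂ → p₁ ++ p₂ ++ p₁ = p₀ →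
    ¬ (wpow (p₁ ++ p₂) 2 ++ p₁ <+: z.drop (n - 1))}

/-- `Γ(n)` -/
def Gamma (n : ℕ) : Set (List α × List α) :=
  {pq | PalCouple pq.1 pq.2 ∧ pq.1 ++ pq.2 ++ pq.1 <+: z.drop (n - 1) ∧
    (pq.1 ++ pq.2 ++ pq.1 ∈ FirmPalPrefix z n → pq.1 = [])}

/-- palindromic extension tuples `(n, p₁, p₂, α)` of the position `n` -/
def PalExt (n : ℕ) : Set (ℕ × List α × List α × ℕ) :=
  {T | T.1 = n ∧ PalCouple T.2.1 T.2.2.1 ∧ 1 ≤ T.2.2.2 ∧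
    ((wpow (T.2.1 ++ T.2.2.1) T.2.2.2 ++ T.2.1 <+: z.drop (n - 1) ∧
        T.2.1 ++ T.2.2.1 ++ T.2.1 ∉ FirmPalPrefix z n) ∨
      (T.2.1 = [] ∧ T.2.2.2 = 1 ∧ T.2.2.1 ∈ FirmPalPrefix z n))}

/-- palindromic extension tuples of a set of positions -/
def PalExtSet (D : Set ℕ) : Set (ℕ × List α × List α × ℕ) := ⋃ n ∈ D, PalExt z n

/-- `σ(n, p₁, p₂, α) = n − 1 + |(p₁p₂)^α p₁|` -/
def sigmaPE (T : ℕ × List α × List α × ℕ) : ℕ :=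
  T.1 - 1 + (wpow (T.2.1 ++ T.2.2.1) T.2.2.2 ++ T.2.1).length

/-- covering palindromes of the position `n` -/
def CovPalAll (n : ℕ) : Set (ℕ × ℕ) :=
  {q | 1 ≤ q.1 ∧ q.1 ≤ n ∧ n ≤ q.2 ∧ q.2 ≤ z.length ∧ IsPal (seg z q.1 q.2)}

def CovPalAllLeft (n : ℕ) : Set (ℕ × ℕ) :=
  {q ∈ CovPalAll z n | 2 * n ≤ q.1 + q.2}

/-- edge covering palindromes of the position `n` -/
def CovPalEdge (n : ℕ) : Set (ℕ × ℕ) :=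
  {q ∈ CovPalAll z n | 1 < q.1 → q.2 < z.length → ¬ IsPal (seg z (q.1 - 1) (q.2 + 1))}

def CovPalEdgeLeft (n : ℕ) : Set (ℕ × ℕ) := CovPalAllLeft z n ∩ CovPalEdge z n

/-- `Mirror(n₁, n₂, j) = n₁ + n₂ − j` -/
def Mirror (n₁ n₂ j : ℕ) : ℕ := n₁ + n₂ - j

/-- the characterization of `toPalCouple(n₁, n₂) = (p₁, p₂)` -/
def IsToPalCouple (n₁ n₂ : ℕ) (p₁ p₂ : List α) : Prop :=
  PalCouple p₁ p₂ ∧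
  ((seg z n₁ n₂ ∈ FirmPalPrefix z n₁ ∧ p₁ = [] ∧ p₂ = seg z n₁ n₂) ∨
    (seg z n₁ n₂ ∉ FirmPalPrefix z n₁ ∧ wpow (p₁ ++ p₂) 2 ++ p₁ <+: z.drop (n₁ - 1) ∧
      ∃ a : ℕ, 1 ≤ a ∧ seg z n₁ n₂ = wpow (p₁ ++ p₂) a ++ p₁))

/-- compound covering palindromes of `n` -/
def CovPalCmd (n : ℕ) : Set (ℕ × ℕ) :=
  {q ∈ CovPalEdgeLeft z n | ∀ p₁ p₂ : List α, IsToPalCouple z n (Mirror q.1 q.2 n) p₁ p₂ →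
    ¬ FactorOfPow (seg z q.1 q.2) (p₁ ++ p₂)}

/-- `(ν₁, ν₂, ξ)` is a run of `z` -/
def IsRun (ν₁ ν₂ ξ : ℕ) : Prop :=
  1 ≤ ν₁ ∧ ν₁ ≤ ν₂ ∧ ν₂ ≤ z.length ∧ IsPeriod (seg z ν₁ ν₂) ξ ∧
  ξ ≤ ν₂ - ν₁ + 1 ∧
  (ν₂ < z.length → ¬ IsPeriod (seg z ν₁ (ν₂ + 1)) ξ) ∧
  (1 < ν₁ → ¬ IsPeriod (seg z (ν₁ - 1) ν₂) ξ) ∧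
  ∃ p₁ p₂ : List α, PalCouple p₁ p₂ ∧ (p₁ ++ p₂).length = ξ ∧ p₁ ++ p₂ <+: seg z ν₁ ν₂

/-- the characterization of `pToRun(n₁, n₂) = r` -/
def IsPToRun (n₁ n₂ : ℕ) (r : ℕ × ℕ × ℕ) : Prop :=
  IsRun z r.1 r.2.1 r.2.2 ∧ r.1 ≤ n₁ ∧ n₂ ≤ r.2.1 ∧
  ∃ p₁ p₂ : List α, IsToPalCouple z n₁ n₂ p₁ p₂ ∧ r.2.2 = (p₁ ++ p₂).length

/-- `pToRun(X)` as a set of runs -/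
def pToRunImage (X : Set (ℕ × ℕ)) : Set (ℕ × ℕ × ℕ) :=
  {r | ∃ q ∈ X, IsPToRun z q.1 q.2 r}

/-- the collection `UC` -/
def UC : Set (Set ℕ) :=
  {S | S ⊆ Set.Icc 1 z.length ∧ ∀ μ₁ μ₂ ξ : ℕ, 1 ≤ μ₁ → μ₁ ≤ μ₂ → μ₂ ≤ z.length →
    IsPeriod (seg z μ₁ μ₂) ξ →
    ∃ E : Set ℕ, E ⊆ Set.Icc μ₁ μ₂ ∧ E.Finite ∧ E.ncard ≤ 8 ∧
      S ∩ (⋃ δ ∈ E, Set.Icc δ (δ + ξ - 1)) = S ∩ Set.Icc μ₁ μ₂}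

end PalLen

namespace PalLen

variable {α : Type*}

/-- the sets `B_j` of base positions, built from the chain `zs 1, …, zs h` of
non-periodic palindromic prefixes and the middle palindromes `zh i` -/
def BaseB (zs zh : ℕ → List α) : ℕ → Set (ℕ × ℕ)
  | 0 => ∅
  | 1 => {(1, 1)}
  | j + 2 => BaseB zs zh (j + 1) ∪
      ((fun q : ℕ × ℕ => (q.1, q.2 + (zs (j + 1)).length + (zh (j + 1)).length)) ''
        BaseB zs zh (j + 1)) ∪
      {(j + 2, 1)}

end PalLen

namespace PalLen

variable {α : Type*}

-- period passes to infix
lemma IsPeriod.of_infix {s t : List α} {ξ : ℕ} (h : IsPeriod t ξ) (hs : s <:+: t) :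
    IsPeriod s ξ := by
  obtain ⟨u, v, rfl⟩ := hs
  refine ⟨h.1, fun i hi => ?_⟩
  have h1 : (u ++ s ++ v)[u.length + i]? = s[i]? := by
    rw [List.append_assoc, List.getElem?_append_right (by omega),
      List.getElem?_append_left (by omega)]
    congr 1; omega
  have h2 : (u ++ s ++ v)[u.length + (i + ξ)]? = s[i + ξ]? := by
    rw [List.append_assoc, List.getElem?_append_right (by omega),
      List.getElem?_append_left (by omega)]
    congr 1; omega
  rw [← h1, ← h2, show u.length + (i + ξ) = u.length + i + ξ by omega]
  exact h.2 (u.length + i) (by simp only [List.length_append]; omega)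

lemma IsPeriod.of_prefix {s t : List α} {ξ : ℕ} (h : IsPeriod t ξ) (hs : s <+: t) :
    IsPeriod s ξ := h.of_infix hs.isInfix

lemma IsPeriod.of_big {t : List α} {ξ : ℕ} (h1 : 1 ≤ ξ) (h2 : t.length ≤ ξ) :
    IsPeriod t ξ := ⟨h1, fun i hi => by omega⟩

lemma wpow_add (w : List α) (a b : ℕ) : wpow w (a + b) = wpow w a ++ wpow w b := by
  induction a with
  | zero => simp [wpow]
  | succ a ih => rw [Nat.succ_add, wpow, wpow, ih, List.append_assoc]

lemma wpow_length (w : List α) (a : ℕ) : (wpow w a).length = a * w.length := by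
  induction a with
  | zero => simp [wpow]
  | succ a ih => rw [wpow, List.length_append, ih]; ring

lemma wpow_isPeriod {w : List α} (hw : w ≠ []) (m : ℕ) : IsPeriod (wpow w m) w.length := by
  refine ⟨by have := List.length_pos_iff.2 hw; omega, ?_⟩
  induction m with
  | zero => simp [wpow]
  | succ m ih =>
    intro i hi
    rw [wpow] at hi ⊢
    simp only [List.length_append] at hi
    rcases Nat.lt_or_ge i w.length with h | h
    · rw [List.getElem?_append_left h, List.getElem?_append_right (by omega)]
      have hm : m ≠ 0 := by
        rintro rfl
        have : (wpow w 0).length = 0 := by simp [wpow]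
        omega
      obtain ⟨m', rfl⟩ := Nat.exists_eq_succ_of_ne_zero hm
      rw [show i + w.length - w.length = i by omega, wpow, List.getElem?_append_left h]
    · rw [List.getElem?_append_right (by omega), List.getElem?_append_right (by omega)]
      have := ih (i - w.length) (by omega)
      rw [show i + w.length - w.length = i by omega]
      convert this using 2
      omega


lemma period_sub {t : List α} {p q : ℕ} (hp : IsPeriod t p) (hq : IsPeriod t q)
    (hqp : q < p) (hlen : p + q ≤ t.length) : IsPeriod t (p - q) := by
  refine ⟨by omega, fun i hi => ?_⟩
  rcases Nat.lt_or_ge (i + p) t.length with h | h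
  · have e1 := hp.2 i h
    have e2 := hq.2 (i + (p - q)) (by omega)
    rw [show i + (p - q) + q = i + p by omega] at e2
    rw [e1, e2]
  · have hiq : q ≤ i := by omega
    have e1 := hq.2 (i - q) (by omega)
    rw [show i - q + q = i by omega] at e1
    have e2 := hp.2 (i - q) (by omega)
    rw [show i - q + p = i + (p - q) by omega] at e2
    rw [← e1, e2]

lemma fine_wilf : ∀ (N : ℕ) (t : List α) (p q : ℕ), p + q ≤ N → IsPeriod t p → IsPeriod t q →
    p + q ≤ t.length → IsPeriod t (Nat.gcd p q) := by
  intro N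
  induction N with
  | zero => intro t p q hN hp hq _; exact absurd hp.1 (by omega)
  | succ N ih =>
    intro t p q hN hp hq hlen
    have hp1 := hp.1
    have hq1 := hq.1
    rcases lt_trichotomy p q with h | h | h
    · have hsub := period_sub hq hp h (by omega)
      have := ih t p (q - p) (by omega) hp hsub (by omega)
      rwa [Nat.gcd_comm, Nat.gcd_sub_self_left (le_of_lt h), Nat.gcd_comm] at this
    · subst h; rwa [Nat.gcd_self]
    · have hsub := period_sub hp hq h (by omega)
      have := ih t (p - q) q (by omega) hsub hq (by omega)
      rwa [Nat.gcd_sub_self_left (le_of_lt h)] at this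


lemma isPeriod_length {t : List α} (ht : t ≠ []) : IsPeriod t t.length :=
  IsPeriod.of_big (List.length_pos_iff.2 ht) le_rfl

lemma mper_le {t : List α} {ξ : ℕ} (h : IsPeriod t ξ) : mper t ≤ ξ := Nat.sInf_le h

lemma mper_pos {t : List α} (ht : t ≠ []) : 1 ≤ mper t :=
  (Nat.sInf_mem (⟨t.length, isPeriod_length ht⟩ : {ξ | IsPeriod t ξ}.Nonempty)).1

/-- from `wOrder t < 2`: every period `ξ` of `t` satisfies `|t| < 2ξ` -/
lemma lt_two_mul_of_wOrder {t : List α} (ht : t ≠ []) (ho : wOrder t < 2) {ξ : ℕ}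
    (h : IsPeriod t ξ) : t.length < 2 * ξ := by
  have h1 : 1 ≤ mper t := mper_pos ht
  have h2 : mper t ≤ ξ := mper_le h
  have h3 : (0 : ℚ) < (mper t : ℚ) := by exact_mod_cast h1
  rw [wOrder, div_lt_iff₀ h3] at ho
  have : (t.length : ℚ) < 2 * (ξ : ℚ) := by
    calc (t.length : ℚ) < 2 * (mper t : ℚ) := by linarith
    _ ≤ 2 * (ξ : ℚ) := by exact_mod_cast by omega
  exact_mod_cast this

lemma pal_concat {p₁ p₂ : List α} (h1 : IsPal p₁) (h2 : IsPal p₂) :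
    IsPal (p₁ ++ p₂ ++ p₁) := by
  have e1 : p₁.reverse = p₁ := h1
  have e2 : p₂.reverse = p₂ := h2
  simp [IsPal, List.reverse_append, e1, e2, List.append_assoc]

lemma wpow_prefix_mono {w : List α} {a b : ℕ} (h : a ≤ b) : wpow w a <+: wpow w b := by
  obtain ⟨d, rfl⟩ := Nat.exists_eq_add_of_le h
  rw [wpow_add]; exact List.prefix_append _ _

/-- `w^a ++ p₁ <+: w^(a+1)` when `p₁ <+: w` -/
lemma wpow_succ_prefix {w p₁ : List α} (h : p₁ <+: w) (a : ℕ) :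
    wpow w a ++ p₁ <+: wpow w (a + 1) := by
  obtain ⟨r, hr⟩ := h
  refine ⟨r, ?_⟩
  rw [wpow_add, List.append_assoc, hr]
  simp [wpow]

lemma wpow_p_prefix_mono {w p₁ : List α} (h : p₁ <+: w) {a b : ℕ} (hab : a ≤ b) :
    wpow w a ++ p₁ <+: wpow w b ++ p₁ := by
  refine List.prefix_of_prefix_length_le
    ((wpow_succ_prefix h a).trans (wpow_prefix_mono (Nat.succ_le_succ hab)))
    (wpow_succ_prefix h b) ?_
  simp only [List.length_append, wpow_length]
  exact Nat.add_le_add_right (Nat.mul_le_mul_right _ hab) _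

lemma wpow_p_isPeriod {w p₁ : List α} (hw : w ≠ []) (h : p₁ <+: w) (a : ℕ) :
    IsPeriod (wpow w a ++ p₁) w.length :=
  (wpow_isPeriod hw (a + 1)).of_prefix (wpow_succ_prefix h a)



lemma NPP_finite (t : List α) : (NPP t).Finite := by
  refine (t.inits.finite_toSet).subset ?_
  intro p hp
  simpa [List.mem_inits] using hp.2.1

lemma hNPP_pos {z : List α} (hz : z ≠ []) : 1 ≤ hNPP z := by
  obtain ⟨hd, tl, rfl⟩ := List.exists_cons_of_ne_nil hz
  have hm : mper [hd] = 1 :=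
    le_antisymm (mper_le (IsPeriod.of_big le_rfl (by simp))) (mper_pos (by simp))
  have hmem : [hd] ∈ NPP (hd :: tl) := by
    refine ⟨by simp, ⟨tl, rfl⟩, by simp [IsPal], ?_⟩
    rw [wOrder, hm]; norm_num
  have := (Set.ncard_pos (NPP_finite (hd :: tl))).2 ⟨[hd], hmem⟩
  rw [hNPP]; omega

lemma seg_self_isPeriod (z : List α) (i : ℕ) {ξ : ℕ} (hξ : 1 ≤ ξ) : IsPeriod (seg z i i) ξ := by
  refine IsPeriod.of_big hξ ?_
  have h1 : (seg z i i).length ≤ i - i + 1 := by rw [seg]; exact List.length_take_le _ _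
  omega

lemma singleton_mem_NPSW {z : List α} {i : ℕ} (hi : i ∈ Set.Icc 1 z.length) :
    ((({i} : Set ℕ), 1) : Set ℕ × ℕ) ∈ NPSW z := by
  refine ⟨Set.singleton_nonempty i, Set.singleton_subset_iff.2 hi, ?_, ?_⟩
  · ext m
    constructor
    · rintro rfl
      exact ⟨⟨m, rfl, 0, by push_cast; ring⟩, Set.singleton_nonempty m, by simp, by simp⟩
    · rintro ⟨-, -, h1, h2⟩
      simp only [csInf_singleton] at h1
      simp only [csSup_singleton] at h2
      simp only [Set.mem_singleton_iff]
      omega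
  · simp only [csInf_singleton, csSup_singleton]
    exact seg_self_isPeriod z i le_rfl

lemma singleton_mem_NestPer0 {z : List α} {i : ℕ} (hi : i ∈ Set.Icc 1 z.length) :
    ((({i} : Set ℕ), 1) : Set ℕ × ℕ) ∈ NestPer z 0 :=
  ⟨singleton_mem_NPSW hi, Set.ncard_singleton i⟩

lemma sep_mem_NestPer1 {z : List α} (hz : z ≠ []) {C : Set ℕ} {ξ : ℕ}
    (hC : ((C, ξ) : Set ℕ × ℕ) ∈ NPSW z)
    (hsep : ∀ x ∈ C, ∀ y ∈ C, x < y → x + ξ ≤ y) :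
    ((C, ξ) : Set ℕ × ℕ) ∈ NestPer z 1 := by
  show ((C, ξ) : Set ℕ × ℕ) ∈ NestPer z (0 + 1)
  rw [NestPer]
  refine ⟨hC, fun D' hcut => ?_⟩
  rcases Set.eq_empty_or_nonempty D' with rfl | ⟨x, hx⟩
  · exact ⟨∅, Set.empty_subset _, Set.finite_empty, by simp, by simp, by simp⟩
  · have hsub := hcut.1
    have hdiam := hcut.2.resolve_left (Set.nonempty_iff_ne_empty.1 ⟨x, hx⟩)
    have hbdd : BddAbove D' :=
      ((Set.finite_Icc 1 z.length).subset (hsub.trans hC.2.1)).bddAbove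
    rw [diam, if_pos ⟨x, hx⟩] at hdiam
    have hsing : ∀ y ∈ D', y = x := by
      intro y hy
      by_contra hne
      have h1 : sInf D' ≤ x := Nat.sInf_le hx
      have h2 : sInf D' ≤ y := Nat.sInf_le hy
      have h3 : x ≤ sSup D' := le_csSup hbdd hx
      have h4 : y ≤ sSup D' := le_csSup hbdd hy
      rcases Nat.lt_or_ge x y with h | h
      · have := hsep x (hsub hx) y (hsub hy) h; omega
      · have hyx : y < x := by omega
        have := hsep y (hsub hy) x (hsub hx) hyx; omega
    have hx1 : x ∈ Set.Icc 1 z.length := hC.2.1 (hsub hx)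
    have hD'x : D' = {x} := Set.eq_singleton_iff_unique_mem.2 ⟨hx, hsing⟩
    have hU : (⋃ Cp ∈ ({((({x} : Set ℕ), 1) : Set ℕ × ℕ)} : Set (Set ℕ × ℕ)), Cp.1)
        = ({x} : Set ℕ) := by simp
    refine ⟨{((({x} : Set ℕ), 1) : Set ℕ × ℕ)}, ?_, Set.finite_singleton _, ?_, ?_, ?_⟩
    · simp only [Set.singleton_subset_iff]
      exact singleton_mem_NestPer0 hx1
    · rw [Set.ncard_singleton]
      have := hNPP_pos hz
      have ht : theta z (0 + 1) = 100 * hNPP z := by rw [theta, pow_one]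
      omega
    · rw [hU, hD'x]
    · rw [hU]
      intro y hy
      rw [Set.mem_singleton_iff] at hy
      rw [hy]
      exact ⟨⟨x, hx⟩, Nat.sInf_le hx, le_csSup hbdd hx⟩

lemma xi_unique {z' p₁ p₂ q₁ q₂ : List α} (hp : PalCouple p₁ p₂) (hq : PalCouple q₁ q₂)
    (hpq : p₁ ++ p₂ ++ p₁ = q₁ ++ q₂ ++ q₁)
    (h2p : wpow (p₁ ++ p₂) 2 ++ p₁ <+: z') (h2q : wpow (q₁ ++ q₂) 2 ++ q₁ <+: z') :
    (p₁ ++ p₂).length = (q₁ ++ q₂).length := by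
  wlog hle : (p₁ ++ p₂).length ≤ (q₁ ++ q₂).length generalizing p₁ p₂ q₁ q₂ with H
  · exact (H hq hp hpq.symm h2q h2p (le_of_not_ge hle)).symm
  have hp₀ne : p₁ ++ p₂ ++ p₁ ≠ [] := by
    intro h
    rcases List.append_eq_nil_iff.1 h with ⟨h1, -⟩
    exact hp.2.2.1 (List.append_eq_nil_iff.1 h1).2
  have hlp₀ : (p₁ ++ p₂ ++ p₁).length = (p₁ ++ p₂).length + p₁.length :=
    List.length_append
  have hlq₀ : (p₁ ++ p₂ ++ p₁).length = (q₁ ++ q₂).length + q₁.length := by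
    rw [hpq]; exact List.length_append
  have hpne : (p₁ ++ p₂) ≠ [] := fun h => hp.2.2.1 (List.append_eq_nil_iff.1 h).2
  have hqne : (q₁ ++ q₂) ≠ [] := fun h => hq.2.2.1 (List.append_eq_nil_iff.1 h).2
  have hξp1 : 1 ≤ (p₁ ++ p₂).length := List.length_pos_iff.2 hpne
  have hξq1 : 1 ≤ (q₁ ++ q₂).length := List.length_pos_iff.2 hqne
  have e1 : (wpow (p₁ ++ p₂) 2 ++ p₁).length = 2 * (p₁ ++ p₂).length + p₁.length := by
    rw [List.length_append, wpow_length]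
  have e2 : (wpow (q₁ ++ q₂) 2 ++ q₁).length = 2 * (q₁ ++ q₂).length + q₁.length := by
    rw [List.length_append, wpow_length]
  have hpfx : wpow (p₁ ++ p₂) 2 ++ p₁ <+: wpow (q₁ ++ q₂) 2 ++ q₁ := by
    refine List.prefix_of_prefix_length_le h2p h2q ?_
    rw [e1, e2]
    omega
  have hperp : IsPeriod (wpow (p₁ ++ p₂) 2 ++ p₁) (p₁ ++ p₂).length :=
    wpow_p_isPeriod hpne (List.prefix_append _ _) 2
  have hperq : IsPeriod (wpow (p₁ ++ p₂) 2 ++ p₁) (q₁ ++ q₂).length :=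
    (wpow_p_isPeriod hqne (List.prefix_append _ _) 2).of_prefix hpfx
  have hlen : (p₁ ++ p₂).length + (q₁ ++ q₂).length ≤ (wpow (p₁ ++ p₂) 2 ++ p₁).length := by
    rw [e1]
    omega
  have hg : IsPeriod (wpow (p₁ ++ p₂) 2 ++ p₁) (Nat.gcd (p₁ ++ p₂).length (q₁ ++ q₂).length) :=
    fine_wilf ((p₁ ++ p₂).length + (q₁ ++ q₂).length) _ _ _ le_rfl hperp hperq hlen
  have hp₀pfx : p₁ ++ p₂ ++ p₁ <+: wpow (p₁ ++ p₂) 2 ++ p₁ := by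
    have he : p₁ ++ p₂ ++ p₁ = wpow (p₁ ++ p₂) 1 ++ p₁ := by simp [wpow]
    rw [he]
    exact wpow_p_prefix_mono (List.prefix_append _ _) one_le_two
  have hgp₀ : IsPeriod (p₁ ++ p₂ ++ p₁) (Nat.gcd (p₁ ++ p₂).length (q₁ ++ q₂).length) :=
    hg.of_prefix hp₀pfx
  have h2g : (p₁ ++ p₂ ++ p₁).length < 2 * Nat.gcd (p₁ ++ p₂).length (q₁ ++ q₂).length :=
    lt_two_mul_of_wOrder hp₀ne hp.2.2.2 hgp₀
  obtain ⟨kq, hkq⟩ := Nat.gcd_dvd_right (p₁ ++ p₂).length (q₁ ++ q₂).length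
  obtain ⟨kp, hkp⟩ := Nat.gcd_dvd_left (p₁ ++ p₂).length (q₁ ++ q₂).length
  set g := Nat.gcd (p₁ ++ p₂).length (q₁ ++ q₂).length with hgdef
  have hgpos : 1 ≤ g := hgp₀.1
  have hkq1 : kq = 1 := by
    rcases Nat.lt_or_ge kq 2 with h | h
    · interval_cases kq
      · omega
      · rfl
    · have h3 : 2 * g ≤ (q₁ ++ q₂).length := by
        rw [hkq]
        calc 2 * g = g * 2 := by ring
        _ ≤ g * kq := Nat.mul_le_mul_left g h
      omega
  have hkp1 : kp = 1 := by
    rcases Nat.lt_or_ge kp 2 with h | h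
    · interval_cases kp
      · omega
      · rfl
    · have h3 : 2 * g ≤ (p₁ ++ p₂).length := by
        rw [hkp]
        calc 2 * g = g * 2 := by ring
        _ ≤ g * kp := Nat.mul_le_mul_left g h
      omega
  rw [hkq1, mul_one] at hkq
  rw [hkp1, mul_one] at hkp
  omega


theorem statement11_aux (z : List α) (hz : z ≠ []) (hord : Ordinary z)
    (n : ℕ) (hn : n ∈ Set.Icc 1 z.length) :
    omegaMin z 1 (sigmaPE '' PalExt z n) ≤ (NPP z).ncard := by
  classical
  obtain ⟨hn1, hn2⟩ := Set.mem_Icc.1 hn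
  unfold omegaMin
  by_cases hPE : PalExt z n = ∅
  · rw [hPE, Set.image_empty]
    refine le_trans (Nat.sInf_le ?_) (Nat.zero_le _)
    exact ⟨∅, Set.empty_subset _, Set.finite_empty, Set.ncard_empty _, Set.empty_subset _,
      by simp⟩
  -- core facts about tuples
  have core : ∀ T ∈ PalExt z n, T.1 = n ∧ PalCouple T.2.1 T.2.2.1 ∧ 1 ≤ T.2.2.2 ∧
      wpow (T.2.1 ++ T.2.2.1) T.2.2.2 ++ T.2.1 <+: z.drop (n - 1) := by
    intro T hT
    obtain ⟨h1, h2, h3, h4⟩ := hT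
    refine ⟨h1, h2, h3, ?_⟩
    rcases h4 with ⟨hpre, -⟩ | ⟨hp₁, ha, hfirm⟩
    · exact hpre
    · rw [hp₁, ha]
      simpa [wpow] using hfirm.1.2.1
  have hc_ne : ∀ T ∈ PalExt z n, (T.2.1 ++ T.2.2.1) ≠ [] := by
    intro T hT h
    exact ((core T hT).2.1).2.2.1 (List.append_eq_nil_iff.1 h).2
  have hσW : ∀ T ∈ PalExt z n,
      sigmaPE T = n - 1 + (wpow (T.2.1 ++ T.2.2.1) T.2.2.2 ++ T.2.1).length := by
    intro T hT
    simp only [sigmaPE, (core T hT).1]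
  have hσ_eq : ∀ T ∈ PalExt z n,
      sigmaPE T = n - 1 + (T.2.2.2 * (T.2.1 ++ T.2.2.1).length + T.2.1.length) := by
    intro T hT
    rw [hσW T hT]
    simp [wpow_length]
  have hσ_ge : ∀ T ∈ PalExt z n,
      n - 1 + (T.2.1 ++ T.2.2.1 ++ T.2.1).length ≤ sigmaPE T := by
    intro T hT
    have h1 : 1 ≤ T.2.2.2 := (core T hT).2.2.1
    have h2 : (T.2.1 ++ T.2.2.1).length ≤ T.2.2.2 * (T.2.1 ++ T.2.2.1).length :=
      Nat.le_mul_of_pos_left _ h1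
    have hL : (T.2.1 ++ T.2.2.1 ++ T.2.1).length
        = (T.2.1 ++ T.2.2.1).length + T.2.1.length := List.length_append
    rw [hσ_eq T hT, hL]
    exact Nat.add_le_add_left (Nat.add_le_add_right h2 _) _
  have hσ_le : ∀ T ∈ PalExt z n, sigmaPE T ≤ z.length := by
    intro T hT
    have hpre := (core T hT).2.2.2
    have h1 := hpre.length_le
    rw [List.length_drop] at h1
    have h2 := hσW T hT
    omega
  have hpal_pos : ∀ T ∈ PalExt z n, 1 ≤ (T.2.1 ++ T.2.2.1 ++ T.2.1).length := by
    intro T hT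
    have h1 := List.length_pos_iff.2 ((core T hT).2.1).2.2.1
    simp only [List.length_append]
    omega
  -- D facts
  have hDsub : sigmaPE '' PalExt z n ⊆ Set.Icc 1 z.length := by
    rintro x ⟨T, hT, rfl⟩
    refine Set.mem_Icc.2 ⟨?_, hσ_le T hT⟩
    have h1 := hσ_ge T hT
    have h2 := hpal_pos T hT
    omega
  have hDfin : (sigmaPE '' PalExt z n).Finite := (Set.finite_Icc 1 z.length).subset hDsub
  have hDbdd : BddAbove (sigmaPE '' PalExt z n) := hDfin.bddAbove
  have hDne : (sigmaPE '' PalExt z n).Nonempty :=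
    (Set.nonempty_iff_ne_empty.2 hPE).image _
  have hDclose : ∀ x ∈ sigmaPE '' PalExt z n, x ∈ Close (sigmaPE '' PalExt z n) :=
    fun x hx => ⟨hDne, Nat.sInf_le hx, le_csSup hDbdd hx⟩
  have hpalNPP : ∀ T ∈ PalExt z n, T.2.1 ++ T.2.2.1 ++ T.2.1 ∈ NPP (z.drop (n - 1)) := by
    intro T hT
    obtain ⟨-, hc, ha, hpre⟩ := core T hT
    have heq : T.2.1 ++ T.2.2.1 ++ T.2.1 = wpow (T.2.1 ++ T.2.2.1) 1 ++ T.2.1 := by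
      simp [wpow]
    refine ⟨?_, ?_, pal_concat hc.1 hc.2.1, hc.2.2.2⟩
    · intro h
      have := hpal_pos T hT
      rw [h] at this
      simp at this
    · rw [heq]
      exact (wpow_p_prefix_mono (List.prefix_append _ _) ha).trans hpre
  -- the key per-palindrome cover
  have key : ∀ p₀ ∈ (fun T : ℕ × List α × List α × ℕ => T.2.1 ++ T.2.2.1 ++ T.2.1) ''
      PalExt z n,
      ∃ Cξ : Set ℕ × ℕ, Cξ ∈ NestPer z 1 ∧
        (∀ T ∈ PalExt z n, T.2.1 ++ T.2.2.1 ++ T.2.1 = p₀ → sigmaPE T ∈ Cξ.1) ∧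
        Cξ.1 ⊆ Close (sigmaPE '' PalExt z n) := by
    rintro p₀ ⟨T₀, hT₀, hT₀p⟩
    set S : Set (ℕ × List α × List α × ℕ) :=
      {T | T ∈ PalExt z n ∧ T.2.1 ++ T.2.2.1 ++ T.2.1 = p₀} with hSdef
    set Dp := sigmaPE '' S with hDpdef
    have hDpsubD : Dp ⊆ sigmaPE '' PalExt z n :=
      Set.image_mono (fun T hT => hT.1)
    have hDpne : Dp.Nonempty := ⟨sigmaPE T₀, T₀, ⟨hT₀, hT₀p⟩, rfl⟩
    have hDpbdd : BddAbove Dp := BddAbove.mono hDpsubD hDbdd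
    obtain ⟨Tm, hTmS, hTmσ⟩ := Nat.sSup_mem hDpne hDpbdd
    have hTm : Tm ∈ PalExt z n := hTmS.1
    have hTmp : Tm.2.1 ++ Tm.2.2.1 ++ Tm.2.1 = p₀ := hTmS.2
    have hp₀pos : 1 ≤ p₀.length := by
      rw [← hTmp]; exact hpal_pos Tm hTm
    have hs₀le : ∀ T ∈ S, n - 1 + p₀.length ≤ sigmaPE T := by
      intro T hT
      have := hσ_ge T hT.1
      rwa [hT.2] at this
    have hσa1 : ∀ T ∈ S, T.2.2.2 = 1 → sigmaPE T = n - 1 + p₀.length := by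
      intro T hT h1
      rw [hσ_eq T hT.1, h1, one_mul]
      have hL : (T.2.1 ++ T.2.2.1).length + T.2.1.length = p₀.length := by
        rw [← hT.2]; exact (List.length_append).symm
      omega
    have hσTm_mem : sigmaPE Tm ∈ sigmaPE '' PalExt z n := ⟨Tm, hTm, rfl⟩
    rcases Nat.lt_or_ge (n - 1 + p₀.length) (sigmaPE Tm) with hbig | hsmall
    swap
    · -- all σ-values coincide
      have hσTm : sigmaPE Tm = n - 1 + p₀.length := le_antisymm hsmall (hs₀le Tm hTmS)
      have hIcc : sigmaPE Tm ∈ Set.Icc 1 z.length := hDsub hσTm_mem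
      refine ⟨((({sigmaPE Tm} : Set ℕ), 1) : Set ℕ × ℕ), ?_, ?_, ?_⟩
      · refine sep_mem_NestPer1 hz (singleton_mem_NPSW hIcc) ?_
        intro x hx y hy hlt
        rw [Set.mem_singleton_iff] at hx hy
        omega
      · intro T hT hTp
        have hTS : T ∈ S := ⟨hT, hTp⟩
        have h1 : sigmaPE T ≤ sSup Dp := le_csSup hDpbdd ⟨T, hTS, rfl⟩
        have h2 := hs₀le T hTS
        show sigmaPE T ∈ ({sigmaPE Tm} : Set ℕ)
        rw [Set.mem_singleton_iff]
        omega
      · rintro x hx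
        rw [Set.mem_singleton_iff] at hx
        subst hx
        exact hDclose _ hσTm_mem
    · -- the arithmetic-progression case
      set ξ := (Tm.2.1 ++ Tm.2.2.1).length with hξdef
      have hξ1 : 1 ≤ ξ := List.length_pos_iff.2 (hc_ne Tm hTm)
      have hp₀len : p₀.length = ξ + Tm.2.1.length := by
        rw [← hTmp]; exact List.length_append
      have ha2 : 2 ≤ Tm.2.2.2 := by
        by_contra h
        have h1 : Tm.2.2.2 = 1 := by
          have := (core Tm hTm).2.2.1; omega
        have := hσa1 Tm hTmS h1
        omega
      have hbr1 : wpow (Tm.2.1 ++ Tm.2.2.1) Tm.2.2.2 ++ Tm.2.1 <+: z.drop (n - 1) ∧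
          Tm.2.1 ++ Tm.2.2.1 ++ Tm.2.1 ∉ FirmPalPrefix z n := by
        rcases hTm.2.2.2 with h | h
        · exact h
        · exact absurd h.2.1 (by omega)
      have hW := hbr1.1
      have h2m : wpow (Tm.2.1 ++ Tm.2.2.1) 2 ++ Tm.2.1 <+: z.drop (n - 1) :=
        (wpow_p_prefix_mono (List.prefix_append _ _) ha2).trans hW
      have hdvd : ∀ T ∈ S, ξ ∣ sigmaPE T - (n - 1 + p₀.length) := by
        intro T hT
        rcases Nat.lt_or_ge T.2.2.2 2 with h1 | h1
        · have h1' : T.2.2.2 = 1 := by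
            have := (core T hT.1).2.2.1; omega
          rw [hσa1 T hT h1']
          simp
        · have hbrT := (core T hT.1).2.2.2
          have h2T : wpow (T.2.1 ++ T.2.2.1) 2 ++ T.2.1 <+: z.drop (n - 1) :=
            (wpow_p_prefix_mono (List.prefix_append _ _) h1).trans hbrT
          have hxieq : (T.2.1 ++ T.2.2.1).length = ξ :=
            xi_unique (core T hT.1).2.1 (core Tm hTm).2.1 (by rw [hT.2, hTmp]) h2T h2m
          have hσT : sigmaPE T = n - 1 + (T.2.2.2 * ξ + T.2.1.length) := by
            rw [hσ_eq T hT.1, hxieq]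
          have hlenT : p₀.length = ξ + T.2.1.length := by
            rw [← hT.2, ← hxieq]; exact List.length_append
          have hA : T.2.2.2 * ξ = ξ * (T.2.2.2 - 1) + ξ := by
            rw [mul_comm]
            conv_lhs => rw [show T.2.2.2 = (T.2.2.2 - 1) + 1 by omega]
            rw [Nat.mul_succ]
          refine ⟨T.2.2.2 - 1, Nat.sub_eq_of_eq_add ?_⟩
          rw [hσT, hlenT, hA]
          ring
      set s₀ := n - 1 + p₀.length with hs₀def
      have hs₀smax : s₀ ≤ sSup Dp := by rw [← hTmσ]; exact hs₀le Tm hTmS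
      set C : Set ℕ := {m | m ∈ Set.Icc s₀ (sSup Dp) ∧ ξ ∣ m - s₀} with hCdef
      have hs₀C : s₀ ∈ C := ⟨Set.mem_Icc.2 ⟨le_rfl, hs₀smax⟩, by simp⟩
      have hsmaxC : sSup Dp ∈ C :=
        ⟨Set.mem_Icc.2 ⟨hs₀smax, le_rfl⟩, by rw [← hTmσ]; exact hdvd Tm hTmS⟩
      have hsupz : sSup Dp ≤ z.length := by rw [← hTmσ]; exact hσ_le Tm hTm
      have hCicc : C ⊆ Set.Icc 1 z.length := by
        rintro x ⟨hx1, -⟩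
        obtain ⟨h1, h2⟩ := Set.mem_Icc.1 hx1
        exact Set.mem_Icc.2 ⟨by omega, by omega⟩
      have hCinf : sInf C = s₀ := by
        have hmem := Nat.sInf_mem (⟨s₀, hs₀C⟩ : C.Nonempty)
        exact le_antisymm (Nat.sInf_le hs₀C) (Set.mem_Icc.1 hmem.1).1
      have hCbdd : BddAbove C := ((Set.finite_Icc 1 z.length).subset hCicc).bddAbove
      have hCsup : sSup C = sSup Dp :=
        le_antisymm (csSup_le ⟨s₀, hs₀C⟩ fun x hx => (Set.mem_Icc.1 hx.1).2)
          (le_csSup hCbdd hsmaxC)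
      have hsep : ∀ x ∈ C, ∀ y ∈ C, x < y → x + ξ ≤ y := by
        rintro x ⟨hx1, hx2⟩ y ⟨hy1, hy2⟩ hlt
        have hxs := (Set.mem_Icc.1 hx1).1
        have hys := (Set.mem_Icc.1 hy1).1
        have hd : ξ ∣ y - x := by
          have h := Nat.dvd_sub hy2 hx2
          rwa [show y - s₀ - (x - s₀) = y - x by omega] at h
        have := Nat.le_of_dvd (by omega) hd
        omega
      have hNPSW : ((C, ξ) : Set ℕ × ℕ) ∈ NPSW z := by
        refine ⟨⟨s₀, hs₀C⟩, hCicc, ?_, ?_⟩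
        · ext m
          constructor
          · intro hm
            refine ⟨⟨m, hm, 0, by push_cast; ring⟩, ⟨s₀, hs₀C⟩, ?_, ?_⟩
            · rw [hCinf]; exact (Set.mem_Icc.1 hm.1).1
            · rw [hCsup]; exact (Set.mem_Icc.1 hm.1).2
          · rintro ⟨⟨i, hiC, a, hia⟩, -, hm1, hm2⟩
            rw [hCinf] at hm1
            rw [hCsup] at hm2
            refine ⟨Set.mem_Icc.2 ⟨hm1, hm2⟩, ?_⟩
            obtain ⟨hiIcc, hidvd⟩ := hiC
            have hi1 : s₀ ≤ i := (Set.mem_Icc.1 hiIcc).1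
            obtain ⟨c, hc⟩ := hidvd
            have hc' : (i : ℤ) - (s₀ : ℤ) = (ξ : ℤ) * (c : ℤ) := by
              rw [← Int.ofNat_sub hi1]
              exact_mod_cast congrArg (Nat.cast : ℕ → ℤ) hc
            have hz1 : (m : ℤ) - (s₀ : ℤ) = (ξ : ℤ) * c + a * ξ := by
              rw [hia]; linarith [hc']
            have hzd : (ξ : ℤ) ∣ ((m - s₀ : ℕ) : ℤ) := by
              rw [Int.ofNat_sub hm1]
              exact ⟨(c : ℤ) + a, by rw [hz1]; ring⟩
            exact_mod_cast hzd
        · rw [hCinf, hCsup, ← hTmσ]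
          obtain ⟨r, hr⟩ := hW
          have hd1 : z.drop (s₀ - 1) = (z.drop (n - 1)).drop (s₀ - n) := by
            rw [List.drop_drop]
            congr 1
            omega
          have hWl : (wpow (Tm.2.1 ++ Tm.2.2.1) Tm.2.2.2 ++ Tm.2.1).length
              = sigmaPE Tm - (n - 1) := by
            have := hσW Tm hTm; omega
          have hsegeq : seg z s₀ (sigmaPE Tm)
              = (wpow (Tm.2.1 ++ Tm.2.2.1) Tm.2.2.2 ++ Tm.2.1).drop (s₀ - n) := by
            rw [seg, hd1, ← hr, List.drop_append,
              show s₀ - n - (wpow (Tm.2.1 ++ Tm.2.2.1) Tm.2.2.2 ++ Tm.2.1).length = 0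
                by omega,
              List.drop_zero,
              show sigmaPE Tm - s₀ + 1
                  = ((wpow (Tm.2.1 ++ Tm.2.2.1) Tm.2.2.2 ++ Tm.2.1).drop (s₀ - n)).length
                by rw [List.length_drop]; omega]
            exact List.take_left
          rw [hsegeq]
          exact (wpow_p_isPeriod (hc_ne Tm hTm) (List.prefix_append _ _) _).of_infix
            (List.drop_suffix _ _).isInfix
      refine ⟨((C, ξ) : Set ℕ × ℕ), sep_mem_NestPer1 hz hNPSW hsep, ?_, ?_⟩
      · intro T hT hTp
        have hTS : T ∈ S := ⟨hT, hTp⟩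
        exact ⟨Set.mem_Icc.2 ⟨hs₀le T hTS, le_csSup hDpbdd ⟨T, hTS, rfl⟩⟩, hdvd T hTS⟩
      · have hT' : ((n, Tm.2.1, Tm.2.2.1, 1) : ℕ × List α × List α × ℕ) ∈ PalExt z n := by
          refine ⟨rfl, (core Tm hTm).2.1, le_rfl, Or.inl ⟨?_, ?_⟩⟩
          · exact (wpow_p_prefix_mono (List.prefix_append _ _)
              (by omega : 1 ≤ Tm.2.2.2)).trans hW
          · exact hbr1.2
        have hT'S : ((n, Tm.2.1, Tm.2.2.1, 1) : ℕ × List α × List α × ℕ) ∈ S := ⟨hT', hTmp⟩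
        have hσT' : sigmaPE ((n, Tm.2.1, Tm.2.2.1, 1) : ℕ × List α × List α × ℕ) = s₀ :=
          hσa1 _ hT'S rfl
        have hs₀D : s₀ ∈ sigmaPE '' PalExt z n := ⟨_, hT', hσT'⟩
        have hsmaxD : sSup Dp ∈ sigmaPE '' PalExt z n := hDpsubD ⟨Tm, hTmS, hTmσ⟩
        rintro x ⟨hx1, -⟩
        obtain ⟨h1, h2⟩ := Set.mem_Icc.1 hx1
        exact ⟨hDne, le_trans (Nat.sInf_le hs₀D) h1, le_trans h2 (le_csSup hDbdd hsmaxD)⟩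
  choose! F hF using key
  set P := (fun T : ℕ × List α × List α × ℕ => T.2.1 ++ T.2.2.1 ++ T.2.1) '' PalExt z n
    with hPdef
  have hPsub : P ⊆ NPP (z.drop (n - 1)) := by
    rintro p ⟨T, hT, rfl⟩
    exact hpalNPP T hT
  have hPfin : P.Finite := (NPP_finite (z.drop (n - 1))).subset hPsub
  have hMfin : (F '' P).Finite := hPfin.image F
  have hMsub : F '' P ⊆ NestPer z 1 := by
    rintro _ ⟨p₀, hp₀, rfl⟩
    exact (hF p₀ hp₀).1
  have hcov1 : sigmaPE '' PalExt z n ⊆ ⋃ Cp ∈ F '' P, Cp.1 := by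
    rintro x ⟨T, hT, rfl⟩
    have hp₀ : (T.2.1 ++ T.2.2.1 ++ T.2.1) ∈ P := ⟨T, hT, rfl⟩
    exact Set.mem_biUnion ⟨_, hp₀, rfl⟩ ((hF _ hp₀).2.1 T hT rfl)
  have hcov2 : (⋃ Cp ∈ F '' P, Cp.1) ⊆ Close (sigmaPE '' PalExt z n) := by
    intro x hx
    simp only [Set.mem_iUnion, exists_prop] at hx
    obtain ⟨Cp, ⟨p₀, hp₀, rfl⟩, hxC⟩ := hx
    exact (hF p₀ hp₀).2.2 hxC
  have hcard : (F '' P).ncard ≤ (NPP z).ncard := by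
    calc (F '' P).ncard ≤ P.ncard := Set.ncard_image_le hPfin
    _ ≤ (NPP (z.drop (n - 1))).ncard := Set.ncard_le_ncard hPsub (NPP_finite _)
    _ ≤ (NPP z).ncard := hord _ (List.drop_suffix _ _).isInfix
  exact le_trans (Nat.sInf_le ⟨F '' P, hMsub, hMfin, rfl, hcov1, hcov2⟩) hcard

end PalLen
/-- If `z` is ordinary, `1 ≤ n ≤ |z|`, and `D = σ(PalExt(n))`, then
`ω(1, D) ≤ h = |NPP(z)|`. -/
theorem statement11 {α : Type*} (z : List α) (hz : z ≠ []) (hord : PalLen.Ordinary z)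
    (n : ℕ) (hn : n ∈ Set.Icc 1 z.length) :
    PalLen.omegaMin z 1 (PalLen.sigmaPE '' PalLen.PalExt z n) ≤ (PalLen.NPP z).ncard :=
  PalLen.statement11_aux z hz hord n hn
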